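/- arXiv:1308.6555 — 4 statements merged into one kernel-verified Lean document; each statement's English description precedes it below -/
import Mathlib

section
/- Let K and L be locally compact Hausdorff spaces, X a Banach space containing no isomorphic copy of c₀, and T : C₀(K) → C₀(L,X) an isomorphic embedding. Then for every ε > 0 and every y ∈ L, the set K_y(ε) = ⋃_{φ ∈ S_{X*}} { x ∈ K : |T*(φ·δ_y)|({x}) > ε } is finite, where δ_y is the Dirac measure at y, T* is the adjoint of T (with C₀(L,X)* identified with M(L,X*) via the Singer representation), and |·| denotes total variation. -/
/-!
Suppose infinitely many points `x_k` carry atoms `|μ(φ_k)|({x_k}) > ε`. Separate them by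
disjoint open sets. Since `f ↦ φ_k((Tf)(y))` has norm at most `‖T‖`, every `|μ(φ_k)|` has mass
at most `‖T‖` (regularity lets Urysohn functions approximate the Hahn sign function), so
Rosenthal's lemma yields a subsequence in which `|μ(φ_k)|` puts at most `ε/16` on the union of
the other neighbourhoods. Urysohn bumps `f_k` at the atoms, supported where the atom dominates,
have disjoint supports, so `a ↦ ∑ a_k f_k` maps `c₀` into `C₀(K)` with norm `≤ 1`; composed with
`f ↦ (Tf)(y)` it stays bounded below, because `φ_k` of the image is `a_k ∫ f_k dμ(φ_k)` up to
cross terms of size `‖a‖ ε/16`. So `X` would contain `c₀`.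
-/

open MeasureTheory ZeroAtInfty Topology
open scoped ENNReal NNReal

/-- `Y` embeds isomorphically into `Z`. -/
def EmbedsIso (Y Z : Type*) [NormedAddCommGroup Y] [NormedSpace ℝ Y]
    [NormedAddCommGroup Z] [NormedSpace ℝ Z] : Prop :=
  ∃ T : Y →L[ℝ] Z, ∃ A > 0, ∀ u, A * ‖u‖ ≤ ‖T u‖

/-- `X` contains an isomorphic copy of `c₀ = C₀(ℕ, ℝ)`. -/
def ContainsC0Copy (X : Type*) [NormedAddCommGroup X] [NormedSpace ℝ X] : Prop :=
  EmbedsIso C₀(ℕ, ℝ) X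

/-- Integral of a function against a signed measure, via the Jordan decomposition. -/
noncomputable def sIntegral {K : Type*} [MeasurableSpace K] (σ : SignedMeasure K)
    (f : K → ℝ) : ℝ :=
  ∫ x, f x ∂σ.toJordanDecomposition.posPart - ∫ x, f x ∂σ.toJordanDecomposition.negPart

open Set Function Filter

section sIntegral

variable {α : Type*} [MeasurableSpace α] {σ : SignedMeasure α} {f g : α → ℝ}

theorem integrable_posPart_of_totalVariation (hf : Integrable f σ.totalVariation) :
    Integrable f σ.toJordanDecomposition.posPart :=
  hf.mono_measure (Measure.le_add_right le_rfl)

theorem integrable_negPart_of_totalVariation (hf : Integrable f σ.totalVariation) :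
    Integrable f σ.toJordanDecomposition.negPart :=
  hf.mono_measure (Measure.le_add_left le_rfl)

theorem sIntegral_add (hf : Integrable f σ.totalVariation) (hg : Integrable g σ.totalVariation) :
    sIntegral σ (f + g) = sIntegral σ f + sIntegral σ g := by
  simp only [sIntegral, Pi.add_apply]
  rw [integral_add (integrable_posPart_of_totalVariation hf)
      (integrable_posPart_of_totalVariation hg),
    integral_add (integrable_negPart_of_totalVariation hf)
      (integrable_negPart_of_totalVariation hg)]
  ring

theorem sIntegral_smul (c : ℝ) (f : α → ℝ) :
    sIntegral σ (c • f) = c * sIntegral σ f := by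
  simp only [sIntegral, Pi.smul_apply, smul_eq_mul, integral_const_mul]
  ring

theorem abs_sIntegral_le_integral_abs (hf : Integrable f σ.totalVariation) :
    |sIntegral σ f| ≤ ∫ x, |f x| ∂σ.totalVariation := by
  rw [SignedMeasure.totalVariation, integral_add_measure
    (integrable_posPart_of_totalVariation hf).abs (integrable_negPart_of_totalVariation hf).abs]
  exact (abs_sub _ _).trans (add_le_add (abs_integral_le_integral_abs)
    (abs_integral_le_integral_abs))

theorem abs_sIntegral_le_of_abs_le {s : Set α} {C : ℝ} (hf : Integrable f σ.totalVariation)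
    (hfC : ∀ x, |f x| ≤ C) (hfs : ∀ x ∉ s, f x = 0) :
    |sIntegral σ f| ≤ C * σ.totalVariation.real s := by
  refine (abs_sIntegral_le_integral_abs hf).trans ?_
  rw [← setIntegral_eq_integral_of_forall_compl_eq_zero fun x hx => by simp [hfs x hx]]
  refine (le_abs_self _).trans ?_
  simpa using norm_setIntegral_le_of_norm_le_const (measure_lt_top _ s)
    (f := fun x => |f x|) fun x _ => by simpa using hfC x

theorem abs_sIntegral_indicator_singleton [MeasurableSingletonClass α] (p : α) :
    |sIntegral σ (({p} : Set α).indicator 1)| = σ.totalVariation.real {p} := by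
  obtain ⟨s, -, hpos, hneg⟩ := σ.toJordanDecomposition.mutuallySingular
  rw [sIntegral, integral_indicator_one (measurableSet_singleton p),
    integral_indicator_one (measurableSet_singleton p), SignedMeasure.totalVariation,
    measureReal_add_apply]
  by_cases hp : p ∈ s
  · rw [(measureReal_eq_zero_iff).2 (measure_mono_null (singleton_subset_iff.2 hp) hpos)]
    simp
  · rw [(measureReal_eq_zero_iff).2 (measure_mono_null (singleton_subset_iff.2 hp) hneg)]
    simp

theorem totalVariation_real_singleton_sub_le_abs_sIntegral [MeasurableSingletonClass α] {p : α}
    {s : Set α} (hf : Integrable f σ.totalVariation) (hfp : f p = 1) (hf1 : ∀ x, |f x| ≤ 1)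
    (hfs : ∀ x ∉ s, f x = 0) :
    σ.totalVariation.real {p} - σ.totalVariation.real (s \ {p}) ≤ |sIntegral σ f| := by
  set e : α → ℝ := ({p} : Set α).indicator 1
  have he : Integrable e σ.totalVariation :=
    (integrable_const 1).indicator (measurableSet_singleton p)
  have hrest : |sIntegral σ (f - e)| ≤ 1 * σ.totalVariation.real (s \ {p}) := by
    refine abs_sIntegral_le_of_abs_le (hf.sub he) (fun x => ?_) (fun x hx => ?_)
    · by_cases hx : x = p
      · simp [e, hx, hfp]
      · simpa [e, hx] using hf1 x
    · by_cases hxp : x = p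
      · simp [e, hxp, hfp]
      · simp [e, hxp, hfs x fun hxs => hx ⟨hxs, hxp⟩]
  calc σ.totalVariation.real {p} - σ.totalVariation.real (s \ {p})
      ≤ |sIntegral σ e| - |sIntegral σ (f - e)| := by
        rw [abs_sIntegral_indicator_singleton]
        linarith
    _ ≤ |sIntegral σ e + sIntegral σ (f - e)| := by
        simpa using abs_sub_abs_le_abs_sub (sIntegral σ e) (-sIntegral σ (f - e))
    _ = |sIntegral σ f| := by rw [← sIntegral_add he (hf.sub he), add_sub_cancel]

theorem exists_sIntegral_indicator_sub_indicator_eq_totalVariation (σ : SignedMeasure α) :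
    ∃ s, MeasurableSet s ∧
      sIntegral σ (sᶜ.indicator 1 - s.indicator 1) = σ.totalVariation.real univ := by
  obtain ⟨s, hs, hpos, hneg⟩ := σ.toJordanDecomposition.mutuallySingular
  refine ⟨s, hs, ?_⟩
  have hP : (sᶜ.indicator 1 - s.indicator 1 : α → ℝ) =ᵐ[σ.toJordanDecomposition.posPart] 1 := by
    filter_upwards [measure_eq_zero_iff_ae_notMem.1 hpos] with x hx
    simp [hx]
  have hN : (sᶜ.indicator 1 - s.indicator 1 : α → ℝ) =ᵐ[σ.toJordanDecomposition.negPart] -1 := by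
    filter_upwards [measure_eq_zero_iff_ae_notMem.1 hneg] with x hx
    simp only [mem_compl_iff, not_not] at hx
    simp [hx]
  rw [sIntegral, integral_congr_ae hP, integral_congr_ae hN, SignedMeasure.totalVariation,
    measureReal_add_apply]
  simp

end sIntegral

namespace ZeroAtInftyContinuousMap

variable {α β : Type*} [TopologicalSpace α] [NormedAddCommGroup β]

theorem norm_coe_le_norm (f : C₀(α, β)) (x : α) : ‖f x‖ ≤ ‖f‖ :=
  norm_toBCF_eq_norm (f := f) ▸ f.toBCF.norm_coe_le_norm x

theorem norm_le {f : C₀(α, β)} {C : ℝ} (hC : 0 ≤ C) : ‖f‖ ≤ C ↔ ∀ x, ‖f x‖ ≤ C :=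
  norm_toBCF_eq_norm (f := f) ▸ f.toBCF.norm_le hC

theorem integrable [MeasurableSpace α] [OpensMeasurableSpace α] (f : C₀(α, ℝ)) (μ : Measure α)
    [IsFiniteMeasure μ] : Integrable f μ :=
  f.toBCF.integrable μ

theorem exists_norm_le_two_mul_norm [Nonempty α] (f : C₀(α, β)) : ∃ x, ‖f‖ ≤ 2 * ‖f x‖ := by
  by_contra! h
  have hhalf := (norm_le (f := f) (C := ‖f‖ / 2) (by positivity)).2 fun x => by
    linarith [h x]
  obtain ⟨x⟩ := ‹Nonempty α›
  linarith [h x, norm_nonneg (f x)]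

variable [NormedSpace ℝ β]

noncomputable def evalCLM (x : α) : C₀(α, β) →L[ℝ] β :=
  LinearMap.mkContinuous
    { toFun := fun f => f x
      map_add' := fun _ _ => rfl
      map_smul' := fun _ _ => rfl }
    1 fun f => by simpa using f.norm_coe_le_norm x

@[simp] theorem evalCLM_apply (x : α) (f : C₀(α, β)) : evalCLM x f = f x := rfl

end ZeroAtInftyContinuousMap

def ContinuousMap.toC₀ {α β : Type*} [TopologicalSpace α] [NormedAddCommGroup β] (g : C(α, β))
    (hg : HasCompactSupport g) : C₀(α, β) :=
  ⟨g, hg.is_zero_at_infty⟩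

@[simp] theorem ContinuousMap.toC₀_apply {α β : Type*} [TopologicalSpace α] [NormedAddCommGroup β]
    (g : C(α, β)) (hg : HasCompactSupport g) (x : α) : g.toC₀ hg x = g x :=
  rfl

section LocallyCompact

variable {K : Type*} [TopologicalSpace K] [LocallyCompactSpace K] [T2Space K]

theorem exists_C₀_eqOn_one_eqOn_neg_one {C₁ C₂ : Set K} (h₁ : IsCompact C₁) (h₂ : IsCompact C₂)
    (hd : Disjoint C₁ C₂) : ∃ f : C₀(K, ℝ), ‖f‖ ≤ 1 ∧ EqOn f 1 C₁ ∧ EqOn f (-1) C₂ := by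
  obtain ⟨V₁, V₂, hV₁, hV₂, hCV₁, hCV₂, hV⟩ := SeparatedNhds.of_isCompact_isCompact h₁ h₂ hd
  obtain ⟨g₁, hg₁1, hg₁0, hg₁c, hg₁I⟩ := exists_continuous_one_zero_of_isCompact h₁
    hV₁.isClosed_compl (disjoint_compl_right_iff_subset.2 hCV₁)
  obtain ⟨g₂, hg₂1, hg₂0, hg₂c, hg₂I⟩ := exists_continuous_one_zero_of_isCompact h₂
    hV₂.isClosed_compl (disjoint_compl_right_iff_subset.2 hCV₂)
  have hg₂V₁ : ∀ x ∈ V₁, g₂ x = 0 := fun x hx => hg₂0 (disjoint_left.1 hV hx)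
  have hg₁V₂ : ∀ x ∈ V₂, g₁ x = 0 := fun x hx => hg₁0 (disjoint_right.1 hV hx)
  refine ⟨g₁.toC₀ hg₁c - g₂.toC₀ hg₂c,
    (ZeroAtInftyContinuousMap.norm_le zero_le_one).2 fun x => ?_,
    fun x hx => by simp [hg₁1 hx, hg₂V₁ x (hCV₁ hx)],
    fun x hx => by simp [hg₂1 hx, hg₁V₂ x (hCV₂ hx)]⟩
  obtain ⟨h₁0, h₁1⟩ := hg₁I x
  obtain ⟨h₂0, h₂1⟩ := hg₂I x
  by_cases hx : x ∈ V₁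
  · simp only [ZeroAtInftyContinuousMap.sub_apply, ContinuousMap.toC₀_apply, hg₂V₁ x hx]
    exact abs_le.2 ⟨by linarith, by linarith⟩
  · simp only [ZeroAtInftyContinuousMap.sub_apply, ContinuousMap.toC₀_apply, hg₁0 hx]
    exact abs_le.2 ⟨by simp; linarith, by simp; linarith⟩

variable [MeasurableSpace K] [OpensMeasurableSpace K]

theorem totalVariation_real_univ_le_of_abs_sIntegral_le {σ : SignedMeasure K}
    [σ.totalVariation.Regular] {C : ℝ} (hC : 0 ≤ C)
    (hσ : ∀ f : C₀(K, ℝ), |sIntegral σ f| ≤ C * ‖f‖) :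
    σ.totalVariation.real univ ≤ C := by
  obtain ⟨s, hs, hsσ⟩ := exists_sIntegral_indicator_sub_indicator_eq_totalVariation σ
  refine le_of_forall_pos_le_add fun δ hδ => ?_
  have hδ' : ENNReal.ofReal (δ / 4) ≠ 0 := (ENNReal.ofReal_pos.2 (by positivity)).ne'
  have hfin : ∀ t, σ.totalVariation t ≠ ∞ := measure_ne_top _
  -- `f` below agrees with the Hahn sign function `h` off a set of `|σ|`-measure `< δ / 2`
  obtain ⟨C₁, hC₁s, hC₁, hC₁δ⟩ := hs.compl.exists_isCompact_sdiff_lt (hfin _) hδ'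
  obtain ⟨C₂, hC₂s, hC₂, hC₂δ⟩ := hs.exists_isCompact_sdiff_lt (hfin _) hδ'
  obtain ⟨f, hf1, hfC₁, hfC₂⟩ := exists_C₀_eqOn_one_eqOn_neg_one hC₁ hC₂
    (disjoint_compl_left.mono hC₁s hC₂s)
  set h : K → ℝ := sᶜ.indicator 1 - s.indicator 1
  have hint : Integrable h σ.totalVariation :=
    ((integrable_const 1).indicator hs.compl).sub ((integrable_const 1).indicator hs)
  have hfint := f.integrable σ.totalVariation
  have hrest : |sIntegral σ (h - f)| ≤ 2 * σ.totalVariation.real ((sᶜ \ C₁) ∪ (s \ C₂)) := by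
    refine abs_sIntegral_le_of_abs_le (hint.sub hfint) (fun x => ?_) (fun x hx => ?_)
    · have hfx := (f.norm_coe_le_norm x).trans hf1
      rw [Real.norm_eq_abs] at hfx
      by_cases hxs : x ∈ s <;> simp [h, hxs] <;> grind [abs_le]
    · by_cases hxs : x ∈ s
      · simp [h, hxs, hfC₂ (not_not.1 fun hx₂ => hx (Or.inr ⟨hxs, hx₂⟩))]
      · simp [h, hxs, hfC₁ (not_not.1 fun hx₁ => hx (Or.inl ⟨hxs, hx₁⟩))]
  have hsmall : σ.totalVariation.real ((sᶜ \ C₁) ∪ (s \ C₂)) ≤ δ / 2 :=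
    calc _ ≤ σ.totalVariation.real (sᶜ \ C₁) + σ.totalVariation.real (s \ C₂) :=
          measureReal_union_le _ _
      _ ≤ δ / 4 + δ / 4 := add_le_add (ENNReal.toReal_lt_of_lt_ofReal hC₁δ).le
          (ENNReal.toReal_lt_of_lt_ofReal hC₂δ).le
      _ = δ / 2 := by ring
  calc σ.totalVariation.real univ = sIntegral σ f + sIntegral σ (h - f) := by
        rw [← hsσ, ← sIntegral_add hfint (hint.sub hfint), add_sub_cancel]
    _ ≤ C * ‖f‖ + 2 * (δ / 2) := add_le_add ((le_abs_self _).trans (hσ f))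
        ((le_abs_self _).trans (hrest.trans (by linarith)))
    _ ≤ C + δ := by nlinarith [norm_nonneg f]

theorem exists_bump_sub_le_abs_sIntegral (σ : SignedMeasure K) [σ.totalVariation.Regular]
    {p : K} {U : Set K} (hU : IsOpen U) (hp : p ∈ U) {δ : ℝ} (hδ : 0 < δ) :
    ∃ f : C₀(K, ℝ), ‖f‖ ≤ 1 ∧ support f ⊆ U ∧ σ.totalVariation.real {p} - δ ≤ |sIntegral σ f| := by
  obtain ⟨O, hpO, hO, -, hOδ⟩ := (measurableSet_singleton p).exists_isOpen_sdiff_lt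
    (measure_ne_top σ.totalVariation _) (ENNReal.ofReal_pos.2 hδ).ne'
  obtain ⟨g, hg1, hg0, hgc, hgI⟩ := exists_continuous_one_zero_of_isCompact isCompact_singleton
    (hO.inter hU).isClosed_compl
    (disjoint_compl_right_iff_subset.2 (singleton_subset_iff.2 ⟨hpO rfl, hp⟩))
  let f : C₀(K, ℝ) := g.toC₀ hgc
  have hf1 : ∀ x, |f x| ≤ 1 := fun x => abs_le.2 ⟨by simp [f]; linarith [(hgI x).1], (hgI x).2⟩
  have hfs : ∀ x ∉ O ∩ U, f x = 0 := fun x hx => hg0 hx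
  refine ⟨f, (ZeroAtInftyContinuousMap.norm_le zero_le_one).2 hf1,
    fun x hx => (not_not.1 fun h => hx (hfs x h)).2, ?_⟩
  have hrest : σ.totalVariation.real ((O ∩ U) \ {p}) ≤ δ :=
    (measureReal_mono (sdiff_subset_sdiff_left inter_subset_left)).trans
      (ENNReal.toReal_lt_of_lt_ofReal hOδ).le
  linarith [totalVariation_real_singleton_sub_le_abs_sIntegral (f.integrable σ.totalVariation)
    (hg1 rfl) hf1 hfs]

end LocallyCompact

section Separation

variable {X : Type*} [TopologicalSpace X] [T25Space X]

theorem Set.Infinite.exists_mem_isOpen_infinite_sdiff_closure {s : Set X} (hs : s.Infinite) :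
    ∃ a ∈ s, ∃ V, IsOpen V ∧ a ∈ V ∧ (s \ closure V).Infinite := by
  obtain ⟨a, ha, b, hb, hab⟩ := hs.nontrivial
  obtain ⟨U, haU, hU, V, hbV, hV, hUV⟩ := exists_open_nhds_disjoint_closure hab
  have hcover : s ⊆ (s \ closure U) ∪ (s \ closure V) := fun x hx => by
    by_cases hxU : x ∈ closure U
    · exact Or.inr ⟨hx, disjoint_left.1 hUV hxU⟩
    · exact Or.inl ⟨hx, hxU⟩
  rcases infinite_union.1 (hs.mono hcover) with h | h
  exacts [⟨a, ha, U, hU, haU, h⟩, ⟨b, hb, V, hV, hbV, h⟩]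

theorem Set.Infinite.exists_seq_mem_isOpen_pairwise_disjoint {s : Set X} (hs : s.Infinite) :
    ∃ (p : ℕ → X) (U : ℕ → Set X), (∀ k, p k ∈ s) ∧ (∀ k, IsOpen (U k)) ∧ (∀ k, p k ∈ U k) ∧
      Pairwise (Disjoint on U) := by
  have : Nonempty X := ⟨hs.nonempty.some⟩
  choose! a ha V hV haV hinf using
    fun (t : Set X) (ht : t.Infinite) => ht.exists_mem_isOpen_infinite_sdiff_closure
  let R : ℕ → Set X := fun k => Nat.rec s (fun _ t => t \ closure (V t)) k
  have hR : ∀ k, (R k).Infinite := fun k => by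
    induction k with
    | zero => exact hs
    | succ k ih => exact hinf _ ih
  have hRanti : Antitone R := antitone_nat_of_succ_le fun k => sdiff_subset
  have hRV : ∀ k j, k < j → a (R j) ∉ closure (V (R k)) := fun k j hkj =>
    (hRanti hkj (ha _ (hR j))).2
  refine ⟨fun k => a (R k), fun k => V (R k) \ ⋃ j ∈ Finset.range k, closure (V (R j)),
    fun k => hRanti (Nat.zero_le k) (ha _ (hR k)),
    fun k => (hV _ (hR k)).sdiff (isClosed_biUnion_finset fun _ _ => isClosed_closure),
    fun k => ⟨haV _ (hR k), by simpa using fun j hj => hRV j k hj⟩, ?_⟩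
  refine (pairwise_disjoint_on _).2 fun j k hjk => disjoint_left.2 fun x hxj hxk => hxk.2 ?_
  exact mem_biUnion (Finset.mem_range.2 hjk) (subset_closure hxj.1)

end Separation

section Rosenthal

variable {α : Type*} [MeasurableSpace α] {ν : ℕ → Measure α} {U : ℕ → Set α} {ε : ℝ≥0∞}

/-- Split `n` into the rows `i ↦ n (pair j i)`. Each row has a bad index, whose measure gains `ε`
on the rest of its row, and that rest is disjoint from `F` and from the new indices' sets. -/
theorem rosenthal_step (hU : Pairwise (Disjoint on U)) (hUm : ∀ n, MeasurableSet (U n))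
    (hbad : ∀ r : ℕ → ℕ, Injective r → ∃ j, ε < ν (r j) (⋃ i ≠ j, U (r i)))
    {c : ℝ≥0∞} {n : ℕ → ℕ} (hn : Injective n) {F : ℕ → Set α} (hFm : ∀ j, MeasurableSet (F j))
    (hFU : ∀ j l, Disjoint (F j) (U (n l))) (hFc : ∀ j, c ≤ ν (n j) (F j)) :
    ∃ (n' : ℕ → ℕ) (F' : ℕ → Set α), Injective n' ∧ (∀ j, MeasurableSet (F' j)) ∧
      (∀ j l, Disjoint (F' j) (U (n' l))) ∧ ∀ j, c + ε ≤ ν (n' j) (F' j) := by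
  choose i hi using fun j => hbad (fun i => n (Nat.pair j i))
    (hn.comp fun i i' h => (Nat.pair_eq_pair.1 h).2)
  have hsep : ∀ j i' l, i' ≠ i j → Disjoint (U (n (Nat.pair j i'))) (U (n (Nat.pair l (i l)))) :=
    fun j i' l hi' => hU <| hn.ne fun h => by
      obtain ⟨rfl, rfl⟩ := Nat.pair_eq_pair.1 h
      exact hi' rfl
  have hchunk : ∀ j, MeasurableSet (⋃ i' ≠ i j, U (n (Nat.pair j i'))) := fun j =>
    MeasurableSet.iUnion fun _ => MeasurableSet.iUnion fun _ => hUm _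
  refine ⟨fun j => n (Nat.pair j (i j)),
    fun j => F (Nat.pair j (i j)) ∪ ⋃ i' ≠ i j, U (n (Nat.pair j i')),
    fun j l h => (Nat.pair_eq_pair.1 (hn h)).1, fun j => (hFm _).union (hchunk j),
    fun j l => (hFU _ _).union_left (disjoint_iUnion₂_left.2 fun i' hi' => hsep j i' l hi'),
    fun j => ?_⟩
  rw [measure_union (disjoint_iUnion₂_right.2 fun _ _ => hFU _ _) (hchunk j)]
  exact add_le_add (hFc _) (hi j).le

/-- Rosenthal's lemma. -/
theorem exists_injective_measure_iUnion_ne_le {M : ℝ≥0∞} (hM : ∀ n, ν n univ ≤ M) (hM_top : M ≠ ∞)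
    (hU : Pairwise (Disjoint on U)) (hUm : ∀ n, MeasurableSet (U n)) (hε : ε ≠ 0) :
    ∃ r : ℕ → ℕ, Injective r ∧ ∀ j, ν (r j) (⋃ i ≠ j, U (r i)) ≤ ε := by
  by_contra! hbad
  have hmass : ∀ k : ℕ, ∃ (n : ℕ → ℕ) (F : ℕ → Set α), Injective n ∧ (∀ j, MeasurableSet (F j)) ∧
      (∀ j l, Disjoint (F j) (U (n l))) ∧ ∀ j, k * ε ≤ ν (n j) (F j) := fun k => by
    induction k with
    | zero => exact ⟨id, fun _ => ∅, injective_id, fun _ => .empty, fun _ _ => empty_disjoint _,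
        fun _ => by simp⟩
    | succ k ih =>
      obtain ⟨n, F, hn, hFm, hFU, hFc⟩ := ih
      simpa [add_mul] using rosenthal_step hU hUm hbad hn hFm hFU hFc
  obtain ⟨k, hk⟩ := ENNReal.exists_nat_mul_gt hε hM_top
  obtain ⟨n, F, -, -, -, hF⟩ := hmass k
  exact (hk.trans_le ((hF 0).trans ((measure_mono (subset_univ _)).trans (hM _)))).false

end Rosenthal

namespace ZeroAtInftyContinuousMap

variable {K : Type*} [TopologicalSpace K] {F : ℕ → C₀(K, ℝ)}
  (hF : Pairwise (Disjoint on fun i => support (F i))) (hF1 : ∀ i, ‖F i‖ ≤ 1)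

include hF in
theorem apply_eq_zero_of_apply_ne_zero {i k : ℕ} {x : K} (hx : F i x ≠ 0) (hk : k ≠ i) :
    F k x = 0 :=
  not_not.1 fun h => disjoint_left.1 (hF hk) h hx

include hF in
theorem exists_forall_ne_apply_eq_zero (x : K) : ∃ i, ∀ k ≠ i, F k x = 0 := by
  by_cases h : ∃ i, F i x ≠ 0
  · obtain ⟨i, hi⟩ := h
    exact ⟨i, fun k hk => apply_eq_zero_of_apply_ne_zero hF hi hk⟩
  · push Not at h
    exact ⟨0, fun k _ => h k⟩

include hF hF1 in
theorem norm_sum_smul_le_of_disjoint_support (t : Finset ℕ) (b : ℕ → ℝ) {c : ℝ} (hc : 0 ≤ c)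
    (hb : ∀ i ∈ t, |b i| ≤ c) : ‖∑ i ∈ t, b i • F i‖ ≤ c := by
  refine (norm_le hc).2 fun x => ?_
  rw [← evalCLM_apply (β := ℝ) x, map_sum]
  simp only [map_smul, evalCLM_apply, smul_eq_mul]
  obtain ⟨i, hi⟩ := exists_forall_ne_apply_eq_zero hF x
  by_cases hit : i ∈ t
  · rw [Finset.sum_eq_single_of_mem i hit fun k _ hk => by rw [hi k hk, mul_zero], norm_mul]
    simpa using mul_le_mul (hb i hit) ((F i).norm_coe_le_norm x |>.trans (hF1 i))
      (norm_nonneg _) hc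
  · rw [Finset.sum_eq_zero fun k hk => by rw [hi k (ne_of_mem_of_not_mem hk hit), mul_zero]]
    simpa using hc

include hF hF1 in
theorem summable_smul_of_disjoint_support (a : C₀(ℕ, ℝ)) : Summable fun i => a i • F i := by
  refine summable_iff_vanishing_norm.2 fun δ hδ => ?_
  have ha : Tendsto a atTop (𝓝 0) := by
    simpa [cocompact_eq_cofinite, Nat.cofinite_eq_atTop] using a.zero_at_infty'
  obtain ⟨N, hN⟩ := eventually_atTop.1 (ha.eventually (Metric.ball_mem_nhds 0 (half_pos hδ)))
  refine ⟨Finset.range N, fun t ht => (norm_sum_smul_le_of_disjoint_support hF hF1 t a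
    (half_pos hδ).le fun i hi => ?_).trans_lt (half_lt_self hδ)⟩
  have hNi : N ≤ i := not_lt.1 fun h => Finset.disjoint_left.1 ht hi (Finset.mem_range.2 h)
  simpa [Real.dist_eq] using (hN i hNi).le

noncomputable def disjointSupportSum : C₀(ℕ, ℝ) →L[ℝ] C₀(K, ℝ) :=
  LinearMap.mkContinuous
    { toFun := fun a => ∑' i, a i • F i
      map_add' := fun a b => by
        simp only [ZeroAtInftyContinuousMap.add_apply]
        rw [← (summable_smul_of_disjoint_support hF hF1 a).tsum_add
          (summable_smul_of_disjoint_support hF hF1 b)]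
        exact tsum_congr fun i => by ext x; simp [add_mul]
      map_smul' := fun c a => by
        simp only [ZeroAtInftyContinuousMap.smul_apply, smul_eq_mul, mul_smul, RingHom.id_apply]
        exact (summable_smul_of_disjoint_support hF hF1 a).tsum_const_smul c }
    1 fun a => by
      rw [one_mul]
      exact le_of_tendsto' (summable_smul_of_disjoint_support hF hF1 a).hasSum.norm fun t =>
        norm_sum_smul_le_of_disjoint_support hF hF1 t a (norm_nonneg a) fun i _ => by
          simpa using a.norm_coe_le_norm i

theorem disjointSupportSum_apply_of_forall_ne (a : C₀(ℕ, ℝ)) {x : K} {i : ℕ}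
    (hx : ∀ k ≠ i, F k x = 0) : disjointSupportSum hF hF1 a x = a i * F i x := by
  change (∑' k, a k • F k) x = _
  rw [← evalCLM_apply (β := ℝ) x,
    (evalCLM x).map_tsum (summable_smul_of_disjoint_support hF hF1 a),
    tsum_eq_single i fun k hk => by simp [hx k hk]]
  simp

theorem abs_sIntegral_disjointSupportSum_sub_le [MeasurableSpace K] [OpensMeasurableSpace K]
    (σ : SignedMeasure K) (a : C₀(ℕ, ℝ)) (j : ℕ) :
    |sIntegral σ (disjointSupportSum hF hF1 a - a j • F j)| ≤
      ‖a‖ * σ.totalVariation.real (⋃ i ≠ j, support (F i)) := by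
  refine abs_sIntegral_le_of_abs_le ((disjointSupportSum hF hF1 a - a j • F j).integrable _)
    (fun x => ?_) (fun x hx => ?_)
  all_goals
    obtain ⟨i, hi⟩ := exists_forall_ne_apply_eq_zero hF x
    simp only [Pi.sub_apply, Pi.smul_apply, smul_eq_mul,
      disjointSupportSum_apply_of_forall_ne hF hF1 a hi]
    obtain rfl | hij := eq_or_ne i j
    · simp [norm_nonneg a]
  · rw [hi j hij.symm, mul_zero, sub_zero, abs_mul]
    exact (mul_le_mul (by simpa using a.norm_coe_le_norm i)
      (by simpa using (F i).norm_coe_le_norm x |>.trans (hF1 i)) (abs_nonneg _)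
      (norm_nonneg a)).trans_eq (mul_one _)
  · have : F i x = 0 := not_not.1 fun h => hx (mem_biUnion hij h)
    simp [this, hi j hij.symm]

end ZeroAtInftyContinuousMap

theorem containsC0Copy_of_disjoint_support {K X : Type*} [TopologicalSpace K] [MeasurableSpace K]
    [OpensMeasurableSpace K] [NormedAddCommGroup X] [NormedSpace ℝ X] (W : C₀(K, ℝ) →L[ℝ] X)
    (σ : ℕ → SignedMeasure K) (hσ : ∀ j (f : C₀(K, ℝ)), |sIntegral (σ j) f| ≤ ‖W f‖)
    {F : ℕ → C₀(K, ℝ)} (hF : Pairwise (Disjoint on fun i => support (F i))) (hF1 : ∀ i, ‖F i‖ ≤ 1)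
    {δ η : ℝ} (hδη : 2 * η < δ) (hdiag : ∀ j, δ ≤ |sIntegral (σ j) (F j)|)
    (hcross : ∀ j, (σ j).totalVariation.real (⋃ i ≠ j, support (F i)) ≤ η) :
    ContainsC0Copy X := by
  set Φ := ZeroAtInftyContinuousMap.disjointSupportSum hF hF1
  refine ⟨W.comp Φ, δ / 2 - η, by linarith, fun a => ?_⟩
  obtain ⟨j, hj⟩ := a.exists_norm_le_two_mul_norm
  rw [Real.norm_eq_abs] at hj
  have hη : 0 ≤ η := measureReal_nonneg.trans (hcross 0)
  have hsplit : sIntegral (σ j) (Φ a) =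
      a j * sIntegral (σ j) (F j) + sIntegral (σ j) (Φ a - a j • F j) := by
    have := sIntegral_add (σ := σ j) ((a j • F j).integrable _) ((Φ a - a j • F j).integrable _)
    rwa [← ZeroAtInftyContinuousMap.coe_add, add_sub_cancel, ZeroAtInftyContinuousMap.coe_smul,
      sIntegral_smul] at this
  have hrest :=
    (ZeroAtInftyContinuousMap.abs_sIntegral_disjointSupportSum_sub_le hF hF1 (σ j) a j).trans
      (mul_le_mul_of_nonneg_left (hcross j) (norm_nonneg a))
  calc (δ / 2 - η) * ‖a‖ ≤ |a j| * δ - ‖a‖ * η := by nlinarith [norm_nonneg a]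
    _ ≤ |a j| * |sIntegral (σ j) (F j)| - |sIntegral (σ j) (Φ a - a j • F j)| := by
        gcongr
        exact hdiag j
    _ ≤ |sIntegral (σ j) (Φ a)| := by
        rw [hsplit, ← abs_mul]
        simpa using abs_sub_abs_le_abs_sub (a j * sIntegral (σ j) (F j))
          (-sIntegral (σ j) (Φ a - a j • F j))
    _ ≤ ‖W.comp Φ a‖ := hσ j (Φ a)

theorem containsC0Copy_of_separated_atoms {K X : Type*} [TopologicalSpace K] [LocallyCompactSpace K]
    [T2Space K] [MeasurableSpace K] [OpensMeasurableSpace K] [NormedAddCommGroup X] [NormedSpace ℝ X]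
    (W : C₀(K, ℝ) →L[ℝ] X) (σ : ℕ → SignedMeasure K) (hreg : ∀ k, (σ k).totalVariation.Regular)
    (hσ : ∀ k (f : C₀(K, ℝ)), |sIntegral (σ k) f| ≤ ‖W f‖) {p : ℕ → K} {U : ℕ → Set K}
    (hU : ∀ k, IsOpen (U k)) (hpU : ∀ k, p k ∈ U k) (hUd : Pairwise (Disjoint on U)) {ε : ℝ}
    (hε : 0 < ε) (hp : ∀ k, ε < (σ k).totalVariation.real {p k}) : ContainsC0Copy X := by
  choose f hf1 hfU hf using fun k =>
    exists_bump_sub_le_abs_sIntegral (σ k) (hU k) (hpU k) (by positivity : 0 < ε / 4)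
  have hfd : Pairwise (Disjoint on fun k => support (f k)) := fun i j hij =>
    (hUd hij).mono (hfU i) (hfU j)
  have hbound : ∀ k, (σ k).totalVariation univ ≤ ENNReal.ofReal ‖W‖ := fun k =>
    (ENNReal.le_ofReal_iff_toReal_le (measure_ne_top _ _) (norm_nonneg W)).2 <|
      totalVariation_real_univ_le_of_abs_sIntegral_le (norm_nonneg W) fun f =>
        (hσ k f).trans (W.le_opNorm f)
  obtain ⟨r, hr, hcross⟩ := exists_injective_measure_iUnion_ne_le hbound ENNReal.ofReal_ne_top hfd
    (fun k => (f k).continuous.isOpen_support.measurableSet)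
    (ENNReal.ofReal_pos.2 (by positivity : 0 < ε / 16)).ne'
  exact containsC0Copy_of_disjoint_support W (fun j => σ (r j)) (fun j => hσ (r j))
    (hfd.comp_of_injective hr) (fun j => hf1 (r j)) (δ := 3 * ε / 4) (η := ε / 16) (by linarith)
    (fun j => by linarith [hf (r j), hp (r j)])
    (fun j => ENNReal.toReal_le_of_le_ofReal (by positivity) (hcross j))

theorem stmt0_general {K L X : Type*}
    [TopologicalSpace K] [LocallyCompactSpace K] [T2Space K]
    [MeasurableSpace K] [BorelSpace K]
    [TopologicalSpace L]
    [NormedAddCommGroup X] [NormedSpace ℝ X]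
    (hX : ¬ ContainsC0Copy X)
    (T : C₀(K, ℝ) →L[ℝ] C₀(L, X))
    (ε : ℝ) (hε : 0 < ε) (y : L)
    (μ : StrongDual ℝ X → SignedMeasure K)
    (hreg : ∀ φ, (μ φ).totalVariation.Regular)
    (hrep : ∀ (φ : StrongDual ℝ X) (f : C₀(K, ℝ)), φ (T f y) = sIntegral (μ φ) f) :
    {x : K | ∃ φ : StrongDual ℝ X, ‖φ‖ = 1 ∧
      ENNReal.ofReal ε < (μ φ).totalVariation {x}}.Finite := by
  by_contra hinf
  obtain ⟨p, U, hps, hU, hpU, hUd⟩ := Set.Infinite.exists_seq_mem_isOpen_pairwise_disjoint hinf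
  choose φ hφ1 hφp using hps
  set W := (ZeroAtInftyContinuousMap.evalCLM y).comp T
  have hσ : ∀ k (f : C₀(K, ℝ)), |sIntegral (μ (φ k)) f| ≤ ‖W f‖ :=
    fun k f => by simpa [W, ← hrep, hφ1 k] using (φ k).le_opNorm (T f y)
  exact hX <| containsC0Copy_of_separated_atoms W (μ ∘ φ) (fun k => hreg _) hσ hU hpU hUd hε
    fun k => (ENNReal.ofReal_lt_iff_lt_toReal hε.le (measure_ne_top _ _)).1 (hφp k)

/-- If `T : C₀(K) → C₀(L,X)` is an isomorphic embedding, `c₀ ↪̸ X`,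
`ε > 0` and `y ∈ L`, then the set `K_y(ε) = ⋃_{φ ∈ S_{X*}} {x : |T*(φ·δ_y)|({x}) > ε}` is
finite.  Here `μ φ` is the regular signed Borel measure on `K` representing the functional
`T*(φ·δ_y) : f ↦ φ((Tf)(y))` (Singer/Riesz representation), and `|·|` is total variation. -/
theorem stmt0 {K L X : Type*}
    [TopologicalSpace K] [LocallyCompactSpace K] [T2Space K]
    [MeasurableSpace K] [BorelSpace K]
    [TopologicalSpace L] [LocallyCompactSpace L] [T2Space L]
    [NormedAddCommGroup X] [NormedSpace ℝ X]
    (hX : ¬ ContainsC0Copy X)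
    (T : C₀(K, ℝ) →L[ℝ] C₀(L, X))
    (hT : ∃ A > 0, ∀ f : C₀(K, ℝ), A * ‖f‖ ≤ ‖T f‖)
    (ε : ℝ) (hε : 0 < ε) (y : L)
    (μ : StrongDual ℝ X → SignedMeasure K)
    (hreg : ∀ φ, (μ φ).totalVariation.Regular)
    (hrep : ∀ (φ : StrongDual ℝ X) (f : C₀(K, ℝ)), φ (T f y) = sIntegral (μ φ) f) :
    {x : K | ∃ φ : StrongDual ℝ X, ‖φ‖ = 1 ∧
      ENNReal.ofReal ε < (μ φ).totalVariation {x}}.Finite :=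
  stmt0_general hX T ε hε y μ hreg hrep
end

section
/- Let K be a scattered compact Hausdorff space and X, Y Banach spaces with Y separable. If Y embeds isomorphically into C(K,X), then there exist a countable metrizable compact space K₀ and a separable closed subspace X₀ ⊆ X such that Y embeds isomorphically into C(K₀,X₀) and C(K₀,X₀) embeds isomorphically into C(K,X). -/
open MeasureTheory Topology

/-- A topological space is scattered if every nonempty subset has a point isolated in it. -/
def IsScattered (α : Type*) [TopologicalSpace α] : Prop :=
  ∀ S : Set α, S.Nonempty → ∃ x ∈ S, ∃ U : Set α, IsOpen U ∧ U ∩ S = {x}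

/-- The pair of embeddings `Y ↪ C(K₀, X₀)` and `C(K₀, X₀) ↪ C(K, X)` in the conclusion
of the metrizability lemma. -/
def FactorsThroughC (Y : Type*) [NormedAddCommGroup Y] [NormedSpace ℝ Y]
    (K : Type*) [TopologicalSpace K] [CompactSpace K]
    (X : Type*) [NormedAddCommGroup X] [NormedSpace ℝ X]
    (K₀ : Type*) [TopologicalSpace K₀] [CompactSpace K₀]
    (X₀ : Submodule ℝ X) : Prop :=
  EmbedsIso Y C(K₀, X₀) ∧ EmbedsIso C(K₀, X₀) C(K, X)

/-!
Fix an embedding `T : Y → C(K, X)` and a dense sequence `(uₙ)` in `Y`. The map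
`Φ : K → X^ℕ`, `s ↦ (T uₙ s)ₙ`, is continuous, so its image `K₀` is a compact metrizable
continuous image of the scattered space `K`; it is therefore scattered, and countable by
Cantor–Bendixson. By density, each `T y` factors through `Φ` and takes values in the closed
linear span `X₀` of the compact sets `T uₙ (K)`, which is separable. Composition with
`Φ : K → K₀` is an isometric embedding `C(K₀, X₀) → C(K, X)`, and `T` factors through it.
-/

open Topology TopologicalSpace Function Set

section Scattered

variable {K L : Type*} [TopologicalSpace K] [TopologicalSpace L]

lemma IsScattered.countable [SecondCountableTopology K] (hK : IsScattered K) : Countable K := by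
  obtain ⟨V, D, hV, hD, huniv⟩ :=
    exists_countable_union_perfect_of_isClosed (isClosed_univ (X := K))
  obtain rfl : D = ∅ := by
    by_contra hne
    obtain ⟨x, hx, U, hU, hUD⟩ := hK D (nonempty_iff_ne_empty.mpr hne)
    obtain ⟨y, hy, hyx⟩ :=
      preperfect_iff_nhds.mp hD.acc x hx U (hU.mem_nhds (hUD.ge (mem_singleton x)).1)
    exact hyx (hUD.le hy)
  rw [union_empty] at huniv
  exact countable_univ_iff.mp (huniv ▸ hV)

lemma Continuous.image_sInter_of_isChain [CompactSpace K] [T1Space L] {f : K → L}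
    (hf : Continuous f) {c : Set (Set K)} (hc : IsChain (· ⊆ ·) c) (hcne : c.Nonempty)
    (hcl : ∀ F ∈ c, IsClosed F) : f '' ⋂₀ c = ⋂ F ∈ c, f '' F := by
  refine (image_sInter_subset c f).antisymm fun y hy => ?_
  have : Nonempty c := hcne.to_subtype
  have hfib : ∀ F : c, IsClosed ((F : Set K) ∩ f ⁻¹' {y}) :=
    fun F => (hcl F F.2).inter (isClosed_singleton.preimage hf)
  obtain ⟨x, hx⟩ := IsCompact.nonempty_iInter_of_directed_nonempty_isCompact_isClosed
    (fun F : c => (F : Set K) ∩ f ⁻¹' {y})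
    (fun F G => (hc.total F.2 G.2).elim (fun h => ⟨F, subset_rfl, inter_subset_inter_left _ h⟩)
      fun h => ⟨G, inter_subset_inter_left _ h, subset_rfl⟩)
    (fun F => let ⟨x, hx, hxy⟩ := mem_iInter₂.mp hy F F.2; ⟨x, hx, hxy⟩)
    (fun F => (hfib F).isCompact) hfib
  simp only [mem_iInter, mem_inter_iff, mem_preimage, mem_singleton_iff] at hx
  exact ⟨x, mem_sInter.mpr fun F hF => (hx ⟨F, hF⟩).1, (hx ⟨_, hcne.some_mem⟩).2⟩

lemma IsScattered.of_surjective [CompactSpace K] [T2Space L] (hK : IsScattered K) {f : K → L}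
    (hf : Continuous f) (hsurj : Surjective f) : IsScattered L := by
  intro S hS
  -- if `F` is closed and minimal with `S ⊆ f '' F`, isolated points of `F` map to ones of `S`
  obtain ⟨F, -, ⟨hFcl, hSF⟩, hFmin⟩ := zorn_superset_nonempty {F | IsClosed F ∧ S ⊆ f '' F}
    (fun c hcP hc hcne => ⟨⋂₀ c, ⟨isClosed_sInter fun F hF => (hcP hF).1, by
      rw [hf.image_sInter_of_isChain hc hcne fun F hF => (hcP hF).1]
      exact subset_iInter₂ fun F hF => (hcP hF).2⟩, fun _ => sInter_subset_of_mem⟩)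
    univ ⟨isClosed_univ, by rw [image_univ, hsurj.range_eq]; exact subset_univ S⟩
  obtain ⟨x, hxF, U, hU, hUF⟩ := hK F (hS.mono hSF).of_image
  have hcl : IsClosed (f '' (F \ U)) := ((hFcl.sdiff hU).isCompact.image hf).isClosed
  have hsub : S \ f '' (F \ U) ⊆ {f x} := by
    rintro _ ⟨hzS, hz⟩
    obtain ⟨w, hwF, rfl⟩ := hSF hzS
    by_cases hwU : w ∈ U
    · exact congrArg f (hUF.le ⟨hwU, hwF⟩)
    · exact (hz ⟨w, ⟨hwF, hwU⟩, rfl⟩).elim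
  have hne : (S \ f '' (F \ U)).Nonempty := by
    refine sdiff_nonempty.mpr fun hS' => ?_
    exact (hFmin ⟨hFcl.sdiff hU, hS'⟩ sdiff_subset hxF).2 (hUF.ge (mem_singleton x)).1
  have heq := hne.subset_singleton_iff.mp hsub
  refine ⟨f x, (heq.ge (mem_singleton _)).1, _, hcl.isOpen_compl, ?_⟩
  rw [inter_comm, ← sdiff_eq, heq]

end Scattered

theorem exists_countable_quotient_of_isScattered {K M : Type*} [TopologicalSpace K]
    [CompactSpace K] [TopologicalSpace M] [MetrizableSpace M] (hK : IsScattered K) {Φ : K → M}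
    (hΦ : Continuous Φ) :
    ∃ (K₀ : Type) (_ : TopologicalSpace K₀) (_ : CompactSpace K₀) (_ : MetrizableSpace K₀)
      (_ : Countable K₀) (q : C(K, K₀)), Surjective q ∧ FactorsThrough Φ q := by
  let L := range Φ
  have : CompactSpace L := isCompact_iff_compactSpace.mp (isCompact_range hΦ)
  let := metrizableSpaceMetric L
  have : Countable L :=
    (hK.of_surjective (hΦ.subtype_mk mem_range_self) rangeFactorization_surjective).countable
  let e : L ≃ₜ Shrink.{0} L := Shrink.homeomorph.{0} L
  refine ⟨Shrink L, inferInstance, e.compactSpace, e.symm.isEmbedding.metrizableSpace,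
    e.symm.injective.countable, ⟨e ∘ rangeFactorization Φ, ?_⟩,
    e.surjective.comp rangeFactorization_surjective, fun s t hst => ?_⟩
  · exact e.continuous.comp (hΦ.subtype_mk mem_range_self)
  · exact congrArg Subtype.val (e.injective hst)

lemma LinearIsometry.embedsIso {Z W : Type*} [NormedAddCommGroup Z] [NormedSpace ℝ Z]
    [NormedAddCommGroup W] [NormedSpace ℝ W] (J : Z →ₗᵢ[ℝ] W) : EmbedsIso Z W :=
  ⟨J.toContinuousLinearMap, 1, one_pos, fun z => by simp⟩

namespace ContinuousMap

variable {K L X : Type*} [TopologicalSpace K] [CompactSpace K] [TopologicalSpace L]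
  [CompactSpace L] [NormedAddCommGroup X] [NormedSpace ℝ X]

noncomputable def precompSubtypeₗᵢ {q : C(K, L)} (hq : Surjective q) (X₀ : Submodule ℝ X) :
    C(L, X₀) →ₗᵢ[ℝ] C(K, X) where
  toFun g := (X₀.subtypeL.compLeftContinuous ℝ L g).comp q
  map_add' _ _ := rfl
  map_smul' _ _ := rfl
  norm_map' g := by
    simp only [norm_eq_iSup_norm]
    exact hq.iSup_comp fun t => ‖g t‖

lemma exists_precompSubtypeₗᵢ_apply_eq {Y : Type*} [NormedAddCommGroup Y] [NormedSpace ℝ Y]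
    [T2Space L] {q : C(K, L)} (hq : Surjective q) {X₀ : Submodule ℝ X} (T : Y →L[ℝ] C(K, X))
    (hfac : ∀ y, FactorsThrough (T y) q) (hmem : ∀ y s, T y s ∈ X₀) :
    ∃ S : Y →L[ℝ] C(L, X₀), ∀ y, precompSubtypeₗᵢ hq X₀ (S y) = T y := by
  let J := precompSubtypeₗᵢ hq X₀
  have hquot := IsQuotientMap.of_surjective_continuous hq q.continuous
  let g (y : Y) : C(K, X₀) := ⟨fun s => ⟨T y s, hmem y s⟩, (T y).continuous.subtype_mk _⟩
  have hg (y : Y) : FactorsThrough (g y) q := fun _ _ h => Subtype.ext (hfac y h)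
  let lift (y : Y) : C(L, X₀) := hquot.lift (g y) (hg y)
  have hlift (y : Y) : J (lift y) = T y := by
    ext s
    exact congrArg Subtype.val (DFunLike.congr_fun (hquot.lift_comp (g y) (hg y)) s)
  refine ⟨LinearMap.mkContinuous
    { toFun := lift
      map_add' := fun y₁ y₂ => J.injective (by simp only [map_add, hlift])
      map_smul' := fun c y => J.injective (by simp only [map_smul, hlift, RingHom.id_apply]) }
    ‖T‖ fun y => ?_, hlift⟩
  simp only [LinearMap.coe_mk, AddHom.coe_mk]
  rw [← J.norm_map, hlift]
  exact T.le_opNorm y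

end ContinuousMap

section DenseSequence

variable {Y K X : Type*} [TopologicalSpace Y] [TopologicalSpace K] [NormedAddCommGroup X]
  {F : Y → C(K, X)} {u : ℕ → Y}

lemma DenseRange.factorsThrough_of_continuous (hF : Continuous F) (hu : DenseRange u) (y : Y) :
    FactorsThrough (F y) fun s n => F (u n) s := fun s t hst =>
  hu.induction_on y
    (isClosed_eq ((continuous_eval_const s).comp hF) ((continuous_eval_const t).comp hF))
    fun n => congrFun hst n

variable [NormedSpace ℝ X]

lemma DenseRange.apply_mem_topologicalClosure_span (hF : Continuous F) (hu : DenseRange u)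
    (y : Y) (s : K) : F y s ∈ (Submodule.span ℝ (⋃ n, range (F (u n)))).topologicalClosure :=
  hu.induction_on y
    ((Submodule.isClosed_topologicalClosure _).preimage ((continuous_eval_const s).comp hF))
    fun n => Submodule.le_topologicalClosure _
      (Submodule.subset_span (mem_iUnion.mpr ⟨n, mem_range_self s⟩))

lemma separableSpace_topologicalClosure_span_iUnion_range [CompactSpace K] (f : ℕ → C(K, X)) :
    SeparableSpace (Submodule.span ℝ (⋃ n, range (f n))).topologicalClosure := by
  have := (IsSeparable.iUnion fun n =>
    (isCompact_range (f n).continuous).isSeparable).span (R := ℝ) |>.closure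
  rw [← Submodule.topologicalClosure_coe] at this
  exact this.separableSpace

end DenseSequence

theorem stmt4_general {K X Y : Type*}
    [TopologicalSpace K] [CompactSpace K]
    [NormedAddCommGroup X] [NormedSpace ℝ X]
    [NormedAddCommGroup Y] [NormedSpace ℝ Y]
    [TopologicalSpace.SeparableSpace Y]
    (hK : IsScattered K)
    (hemb : EmbedsIso Y C(K, X)) :
    ∃ (K₀ : Type) (i₁ : TopologicalSpace K₀) (i₂ : @CompactSpace K₀ i₁),
      @TopologicalSpace.MetrizableSpace K₀ i₁ ∧ Countable K₀ ∧
      ∃ X₀ : Submodule ℝ X, IsClosed (X₀ : Set X) ∧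
        TopologicalSpace.SeparableSpace X₀ ∧
        @FactorsThroughC Y _ _ K _ _ X _ _ K₀ i₁ i₂ X₀ := by
  obtain ⟨T, A, hA, hT⟩ := hemb
  obtain ⟨u, hu⟩ := exists_dense_seq Y
  obtain ⟨K₀, _, _, _, _, q, hq, hqΦ⟩ := exists_countable_quotient_of_isScattered hK
    (continuous_pi fun n => (T (u n)).continuous : Continuous fun s n => T (u n) s)
  let X₀ := (Submodule.span ℝ (⋃ n, range (T (u n)))).topologicalClosure
  let J := ContinuousMap.precompSubtypeₗᵢ hq X₀
  obtain ⟨S, hS⟩ := ContinuousMap.exists_precompSubtypeₗᵢ_apply_eq hq T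
    (fun y _ _ h => hu.factorsThrough_of_continuous T.continuous y (hqΦ h))
    (hu.apply_mem_topologicalClosure_span T.continuous)
  refine ⟨K₀, _, _, ‹_›, ‹_›, X₀, Submodule.isClosed_topologicalClosure _,
    separableSpace_topologicalClosure_span_iUnion_range _, ⟨S, A, hA, fun y => ?_⟩, J.embedsIso⟩
  rw [← J.norm_map, hS]
  exact hT y

/-- If `K` is a scattered compact Hausdorff space, `Y` a separable Banach
space embedding isomorphically into `C(K,X)`, then there are a countable metrizable compact
space `K₀` and a separable closed subspace `X₀ ⊆ X` with
`Y ↪ C(K₀, X₀) ↪ C(K, X)`. -/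
theorem stmt4 {K X Y : Type*}
    [TopologicalSpace K] [CompactSpace K] [T2Space K]
    [NormedAddCommGroup X] [NormedSpace ℝ X] [CompleteSpace X]
    [NormedAddCommGroup Y] [NormedSpace ℝ Y] [CompleteSpace Y]
    [TopologicalSpace.SeparableSpace Y]
    (hK : IsScattered K)
    (hemb : EmbedsIso Y C(K, X)) :
    ∃ (K₀ : Type) (i₁ : TopologicalSpace K₀) (i₂ : @CompactSpace K₀ i₁),
      @TopologicalSpace.MetrizableSpace K₀ i₁ ∧ Countable K₀ ∧
      ∃ X₀ : Submodule ℝ X, IsClosed (X₀ : Set X) ∧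
        TopologicalSpace.SeparableSpace X₀ ∧
        @FactorsThroughC Y _ _ K _ _ X _ _ K₀ i₁ i₂ X₀ :=
  stmt4_general hK hemb
end

section
/- Every non-scattered compact Hausdorff space admits a continuous surjection onto the unit interval [0,1]. -/
/-!
A non-scattered space contains a nonempty perfect set, and splitting nonempty perfect sets
again and again into two disjoint nonempty perfect pieces yields a Cantor scheme of closed sets
indexed by finite binary words. For each `n`, Urysohn's lemma gives `f n : K → [0,1]` that is
`0` on the pieces whose `n`-th letter is `0` and `1` on those whose `n`-th letter is `1`. Then
`φ = ∑ f n / 2 ^ (n + 1)` is continuous with values in `[0,1]`. By compactness every binary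
sequence `d` has a point on its branch, where `f n = d n`, so `φ` takes the value
`∑ d n / 2 ^ (n + 1)`; every number in `[0,1]` has this form.
-/

open Set

theorem exists_perfect_nonempty_of_not_isScattered {X : Type*} [TopologicalSpace X] [T1Space X]
    (hX : ¬ IsScattered X) : ∃ C : Set X, Perfect C ∧ C.Nonempty := by
  simp only [IsScattered, not_forall, not_exists, not_and] at hX
  obtain ⟨S, hSne, hS⟩ := hX
  refine ⟨closure S, preperfect_iff_perfect_closure.mp fun x hx => ?_, hSne.closure⟩
  rw [accPt_iff_nhds]
  intro U hU
  obtain ⟨V, hVU, hVo, hxV⟩ := mem_nhds_iff.mp hU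
  obtain ⟨y, hy, hyx⟩ : ∃ y ∈ V ∩ S, y ≠ x := by
    by_contra! h
    exact hS x hx V hVo (eq_singleton_iff_unique_mem.mpr ⟨⟨hxV, hx⟩, h⟩)
  exact ⟨y, ⟨hVU hy.1, hy.2⟩, hyx⟩

/-- Words are read backwards: the head of a list is its most recent binary choice. -/
structure IsCantorScheme {X : Type*} [TopologicalSpace X] (F : List (Fin 2) → Set X) : Prop where
  isClosed : ∀ l, IsClosed (F l)
  nonempty : ∀ l, (F l).Nonempty
  cons_subset : ∀ i l, F (i :: l) ⊆ F l
  disjoint : ∀ l, Disjoint (F (0 :: l)) (F (1 :: l))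

theorem Perfect.exists_isCantorScheme {X : Type*} [TopologicalSpace X] [T25Space X] {C : Set X}
    (hC : Perfect C) (hne : C.Nonempty) : ∃ F : List (Fin 2) → Set X, IsCantorScheme F := by
  have split : ∀ D : {D : Set X // Perfect D ∧ D.Nonempty},
      ∃ p : Fin 2 → {D : Set X // Perfect D ∧ D.Nonempty},
        (∀ i, (p i).1 ⊆ D.1) ∧ Disjoint (p 0).1 (p 1).1 := by
    rintro ⟨D, hD, hDne⟩
    obtain ⟨C₀, C₁, ⟨h₀, hne₀, hsub₀⟩, ⟨h₁, hne₁, hsub₁⟩, hdisj⟩ := hD.splitting hDne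
    exact ⟨![⟨C₀, h₀, hne₀⟩, ⟨C₁, h₁, hne₁⟩], fun i => by fin_cases i <;> assumption, hdisj⟩
  choose p hp_sub hp_disj using split
  let G : List (Fin 2) → {D : Set X // Perfect D ∧ D.Nonempty} :=
    fun l => l.rec ⟨C, hC, hne⟩ fun i _ D => p D i
  exact ⟨fun l => (G l).1, fun l => (G l).2.1.closed, fun l => (G l).2.2,
    fun i l => hp_sub (G l) i, fun l => hp_disj (G l)⟩

def cantorLevel {X : Type*} (F : List (Fin 2) → Set X) (n : ℕ) (i : Fin 2) : Set X :=
  ⋃ l ∈ {l : List (Fin 2) | l.length = n}, F (i :: l)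

namespace IsCantorScheme

variable {X : Type*} [TopologicalSpace X] {F : List (Fin 2) → Set X}

theorem disjoint_cons_of_ne (hF : IsCantorScheme F) {i j : Fin 2} (hij : i ≠ j)
    (l : List (Fin 2)) : Disjoint (F (i :: l)) (F (j :: l)) := by
  fin_cases i <;> fin_cases j
  all_goals first | exact absurd rfl hij | exact hF.disjoint l | exact (hF.disjoint l).symm

theorem disjoint_of_length_eq (hF : IsCantorScheme F) :
    ∀ {l m : List (Fin 2)}, l.length = m.length → l ≠ m → Disjoint (F l) (F m)
  | [], [], _, hne => absurd rfl hne
  | i :: l, j :: m, hlen, hne => by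
    by_cases hlm : l = m
    · subst hlm
      exact hF.disjoint_cons_of_ne (fun hij => hne (by rw [hij])) l
    · exact (hF.disjoint_of_length_eq (by simpa using hlen) hlm).mono
        (hF.cons_subset i l) (hF.cons_subset j m)

theorem isClosed_cantorLevel (hF : IsCantorScheme F) (n : ℕ) (i : Fin 2) :
    IsClosed (cantorLevel F n i) :=
  (List.finite_length_eq (Fin 2) n).isClosed_biUnion fun l _ => hF.isClosed (i :: l)

theorem disjoint_cantorLevel (hF : IsCantorScheme F) (n : ℕ) :
    Disjoint (cantorLevel F n 0) (cantorLevel F n 1) := by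
  simp only [cantorLevel, disjoint_iUnion_left, disjoint_iUnion_right]
  intro l hl m hm
  exact hF.disjoint_of_length_eq (by simp_all) (by simp)

theorem exists_forall_mem_cantorLevel [CompactSpace X] (hF : IsCantorScheme F) (d : ℕ → Fin 2) :
    ∃ x, ∀ n, x ∈ cantorLevel F n (d n) := by
  let branch : ℕ → List (Fin 2) := fun n => ((List.range n).map d).reverse
  have branch_succ : ∀ n, branch (n + 1) = d n :: branch n := by
    simp [branch, List.range_succ]
  obtain ⟨x, hx⟩ : (⋂ n, F (branch n)).Nonempty :=
    IsCompact.nonempty_iInter_of_sequence_nonempty_isCompact_isClosed _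
      (fun n => branch_succ n ▸ hF.cons_subset _ _) (fun n => hF.nonempty _)
      (hF.isClosed _).isCompact (fun n => hF.isClosed _)
  refine ⟨x, fun n => mem_biUnion (x := branch n) (by simp [branch]) ?_⟩
  exact branch_succ n ▸ mem_iInter.mp hx (n + 1)

end IsCantorScheme

theorem hasSum_one_div_two_pow_succ : HasSum (fun n : ℕ => (1 : ℝ) / 2 ^ (n + 1)) 1 :=
  (hasSum_geometric_two' 1).congr_fun fun n => by rw [pow_succ, div_div, mul_comm]

theorem div_two_pow_succ_le {a : ℝ} (ha : a ∈ Icc 0 1) (n : ℕ) :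
    a / 2 ^ (n + 1) ≤ 1 / 2 ^ (n + 1) :=
  div_le_div_of_nonneg_right ha.2 (by positivity)

theorem summable_div_two_pow_succ {a : ℕ → ℝ} (ha : ∀ n, a n ∈ Icc 0 1) :
    Summable fun n => a n / 2 ^ (n + 1) :=
  hasSum_one_div_two_pow_succ.summable.of_nonneg_of_le
    (fun n => div_nonneg (ha n).1 (by positivity)) fun n => div_two_pow_succ_le (ha n) n

theorem tsum_div_two_pow_succ_mem_Icc {a : ℕ → ℝ} (ha : ∀ n, a n ∈ Icc 0 1) :
    ∑' n, a n / 2 ^ (n + 1) ∈ Icc 0 1 :=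
  ⟨tsum_nonneg fun n => div_nonneg (ha n).1 (by positivity),
    ((summable_div_two_pow_succ ha).tsum_le_tsum (fun n => div_two_pow_succ_le (ha n) n)
      hasSum_one_div_two_pow_succ.summable).trans_eq hasSum_one_div_two_pow_succ.tsum_eq⟩

theorem continuous_tsum_div_two_pow_succ {X : Type*} [TopologicalSpace X] {f : ℕ → X → ℝ}
    (hf : ∀ n, Continuous (f n)) (h01 : ∀ n x, f n x ∈ Icc 0 1) :
    Continuous fun x => ∑' n, f n x / 2 ^ (n + 1) := by
  refine continuous_tsum (fun n => (hf n).div_const _) hasSum_one_div_two_pow_succ.summable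
    fun n x => ?_
  rw [Real.norm_of_nonneg (div_nonneg (h01 n x).1 (by positivity))]
  exact div_two_pow_succ_le (h01 n x) n

theorem IsCantorScheme.exists_continuous_range_eq_Icc {X : Type*} [TopologicalSpace X]
    [CompactSpace X] [T2Space X] {F : List (Fin 2) → Set X} (hF : IsCantorScheme F) :
    ∃ φ : X → ℝ, Continuous φ ∧ range φ = Icc 0 1 := by
  choose f hf0 hf1 hf01 using fun n => exists_continuous_zero_one_of_isClosed
    (hF.isClosed_cantorLevel n 0) (hF.isClosed_cantorLevel n 1) (hF.disjoint_cantorLevel n)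
  refine ⟨fun x => ∑' n, f n x / 2 ^ (n + 1),
    continuous_tsum_div_two_pow_succ (fun n => (f n).continuous) hf01, subset_antisymm ?_ ?_⟩
  · rintro _ ⟨x, rfl⟩
    exact tsum_div_two_pow_succ_mem_Icc fun n => hf01 n x
  · intro y hy
    obtain ⟨d, -, rfl⟩ := Real.ofDigits_SurjOn one_lt_two hy
    obtain ⟨x, hx⟩ := hF.exists_forall_mem_cantorLevel d
    have hfx : ∀ n, f n x = d n := by
      intro n
      have hxn := hx n
      generalize d n = i at hxn ⊢
      fin_cases i
      · simpa using hf0 n hxn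
      · simpa using hf1 n hxn
    refine ⟨x, tsum_congr fun n => ?_⟩
    simp [hfx, Real.ofDigitsTerm, div_eq_mul_inv]

/-- Every non-scattered compact Hausdorff space admits a continuous
surjection onto `[0,1]`. -/
theorem stmt9 {K : Type*} [TopologicalSpace K] [CompactSpace K] [T2Space K]
    (hK : ¬ IsScattered K) :
    ∃ φ : K → ℝ, Continuous φ ∧ Set.range φ = Set.Icc (0 : ℝ) 1 := by
  obtain ⟨C, hC, hne⟩ := exists_perfect_nonempty_of_not_isScattered hK
  obtain ⟨F, hF⟩ := hC.exists_isCantorScheme hne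
  exact hF.exists_continuous_range_eq_Icc
end

section
/- Let X be a Banach space and S : c₀ → X a bounded linear operator such that inf_n ‖S(e_n)‖ > 0, where (e_n) is the standard unit vector basis of c₀. If X contains no isomorphic copy of c₀, this is impossible; equivalently, there exists an infinite subset N ⊆ ℕ such that the restriction of S to the subspace of sequences supported on N is an isomorphism onto its image. -/
open Function Topology ZeroAtInfty Filter

/-!
Pick norming functionals `φₙ` with `‖φₙ‖ ≤ 1` and `φₙ (S eₙ) = ‖S eₙ‖ ≥ δ`. Testing `S` on sign
vectors shows that every row `m ↦ |φₙ (S eₘ)|` has all finite sums bounded by `‖S‖`. Rosenthal's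
disjointification lemma then gives an infinite `M` on which every off-diagonal row sum is at most
`δ / 2`. For `u` supported on `M`, evaluating `φₙ (S u)` at a coordinate `n` where `|uₙ| = ‖u‖`
gives `‖S u‖ ≥ δ ‖u‖ - (δ / 2) ‖u‖`, because the diagonal term dominates the rest.
-/

def OffDiagSumsLE {α : Type*} (g : α → α → ℝ) (I : Set α) (c : ℝ) : Prop :=
  ∀ n ∈ I, ∀ F : Finset α, ↑F ⊆ I \ {n} → ∑ m ∈ F, g n m ≤ c

lemma Set.Infinite.exists_pairwise_disjoint_infinite_subsets {α : Type*} {I : Set α}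
    (hI : I.Infinite) :
    ∃ B : ℕ → Set α, (∀ i, B i ⊆ I) ∧ (∀ i, (B i).Infinite) ∧ Pairwise (Disjoint on B) := by
  set j := hI.natEmbedding
  refine ⟨fun i => Set.range fun t => (j (Nat.pair i t) : α), ?_, ?_, ?_⟩
  · rintro i _ ⟨t, rfl⟩
    exact (j _).2
  · intro i
    refine Set.infinite_range_of_injective fun t t' h => ?_
    simpa using congrArg Nat.unpair (j.injective (Subtype.ext h))
  · intro i i' hii'
    refine Set.disjoint_left.mpr ?_
    rintro _ ⟨t, rfl⟩ ⟨t', h⟩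
    have := congrArg Nat.unpair (j.injective (Subtype.ext h))
    simp only [Nat.unpair_pair, Prod.mk.injEq] at this
    exact hii' this.1.symm

namespace OffDiagSumsLE

variable {α : Type*} {g : α → α → ℝ} {I : Set α} {c c' ε : ℝ}

lemma mono (h : OffDiagSumsLE g I c) (hcc' : c ≤ c') : OffDiagSumsLE g I c' :=
  fun n hn F hF => (h n hn F hF).trans hcc'

lemma exists_infinite_of_add (hI : I.Infinite) (h : OffDiagSumsLE g I (c + ε)) :
    ∃ J ⊆ I, J.Infinite ∧ (OffDiagSumsLE g J ε ∨ OffDiagSumsLE g J c) := by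
  classical
  obtain ⟨B, hBI, hBinf, hBdisj⟩ := hI.exists_pairwise_disjoint_infinite_subsets
  by_cases hsmall : ∃ i, OffDiagSumsLE g (B i) ε
  · obtain ⟨i, hi⟩ := hsmall
    exact ⟨B i, hBI i, hBinf i, Or.inl hi⟩
  -- Each piece `B i` contains a point `n i` with a sum over `F i ⊆ B i` exceeding `ε`. The pieces
  -- are disjoint, so these sums are disjoint from any sum over the other points `n j`, and the
  -- budget `c + ε` of `n i` leaves only `c` for those.
  simp only [OffDiagSumsLE, not_exists, not_forall, not_le] at hsmall
  choose n hnB F hFB hFbig using hsmall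
  have hn : Injective n := fun i i' h =>
    hBdisj.eq (Set.not_disjoint_iff.mpr ⟨n i, hnB i, h ▸ hnB i'⟩)
  refine ⟨Set.range n, Set.range_subset_iff.mpr fun i => hBI i (hnB i),
    Set.infinite_range_of_injective hn, Or.inr ?_⟩
  rintro _ ⟨i, rfl⟩ G hG
  have hdisj : Disjoint G (F i) := Finset.disjoint_left.mpr fun x hxG hxF => by
    obtain ⟨⟨i', rfl⟩, hne⟩ := hG hxG
    have hi' : i' ≠ i := fun h => hne (h ▸ rfl)
    exact Set.disjoint_left.mp (hBdisj hi') (hnB i') (hFB i hxF).1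
  have hunion : ↑(G ∪ F i) ⊆ I \ {n i} := by
    rw [Finset.coe_union]
    exact Set.union_subset
      (hG.trans (Set.sdiff_subset_sdiff_left (Set.range_subset_iff.mpr fun i => hBI i (hnB i))))
      ((hFB i).trans (Set.sdiff_subset_sdiff_left (hBI i)))
  have hsum := h (n i) (hBI i (hnB i)) _ hunion
  rw [Finset.sum_union hdisj] at hsum
  linarith [hFbig i]

theorem exists_infinite (hε : 0 ≤ ε) (k : ℕ) (hI : I.Infinite) (h : OffDiagSumsLE g I (k * ε)) :
    ∃ M ⊆ I, M.Infinite ∧ OffDiagSumsLE g M ε := by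
  induction k generalizing I with
  | zero => exact ⟨I, subset_rfl, hI, h.mono (by simpa using hε)⟩
  | succ k ih =>
    rw [Nat.cast_succ, add_one_mul] at h
    obtain ⟨J, hJI, hJ, hsmall | hsmall⟩ := h.exists_infinite_of_add hI
    · exact ⟨J, hJI, hJ, hsmall⟩
    · obtain ⟨M, hMJ, hM, hMsmall⟩ := ih hJ hsmall
      exact ⟨M, hMJ.trans hJI, hM, hMsmall⟩

end OffDiagSumsLE

namespace ZeroAtInftyContinuousMap

section

variable {α β : Type*} [TopologicalSpace α] [TopologicalSpace β] [AddCommMonoid β]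
  [ContinuousAdd β]

lemma sum_apply {ι : Type*} (s : Finset ι) (f : ι → C₀(α, β)) (x : α) :
    (∑ i ∈ s, f i) x = ∑ i ∈ s, f i x :=
  map_sum (⟨⟨fun f => f x, rfl⟩, fun _ _ => rfl⟩ : C₀(α, β) →+ β) f s

end

variable {α β : Type*} [TopologicalSpace α] [SeminormedAddCommGroup β]

lemma norm_le_of_forall_le {f : C₀(α, β)} {C : ℝ} (hC : 0 ≤ C) (h : ∀ x, ‖f x‖ ≤ C) :
    ‖f‖ ≤ C :=
  (BoundedContinuousFunction.norm_le hC).mpr h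

lemma tendsto_atTop_zero (f : C₀(ℕ, β)) : Tendsto f atTop (𝓝 0) := by
  simpa [cocompact_eq_atTop] using zero_at_infty f

end ZeroAtInftyContinuousMap

open ZeroAtInftyContinuousMap

section UnitVectors

variable {e : ℕ → C₀(ℕ, ℝ)}

lemma sum_smul_unit_apply (he : ∀ n m, e n m = if m = n then 1 else 0) (F : Finset ℕ)
    (a : ℕ → ℝ) (k : ℕ) : (∑ m ∈ F, a m • e m) k = if k ∈ F then a k else 0 := by
  simp [ZeroAtInftyContinuousMap.sum_apply, he]

lemma norm_sum_smul_unit_le (he : ∀ n m, e n m = if m = n then 1 else 0) {F : Finset ℕ}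
    {a : ℕ → ℝ} {C : ℝ} (hC : 0 ≤ C) (h : ∀ m ∈ F, |a m| ≤ C) :
    ‖∑ m ∈ F, a m • e m‖ ≤ C :=
  norm_le_of_forall_le hC fun k => by
    rw [sum_smul_unit_apply he, Real.norm_eq_abs]
    split_ifs with hk
    exacts [h k hk, by simpa using hC]

lemma sum_abs_apply_unit_le_opNorm (he : ∀ n m, e n m = if m = n then 1 else 0)
    (T : C₀(ℕ, ℝ) →L[ℝ] ℝ) (F : Finset ℕ) : ∑ m ∈ F, |T (e m)| ≤ ‖T‖ := by
  set u := ∑ m ∈ F, (SignType.sign (T (e m)) : ℝ) • e m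
  have hu : ‖u‖ ≤ 1 := norm_sum_smul_unit_le he zero_le_one fun m _ => by
    cases SignType.sign (T (e m)) <;> simp
  calc ∑ m ∈ F, |T (e m)| = T u := by simp [u, map_sum, sign_mul_self]
    _ ≤ ‖T‖ * ‖u‖ := (le_abs_self _).trans (T.le_opNorm u)
    _ ≤ ‖T‖ := mul_le_of_le_one_right (norm_nonneg T) hu

lemma tendsto_sum_range_smul_unit (he : ∀ n m, e n m = if m = n then 1 else 0)
    (f : C₀(ℕ, ℝ)) : Tendsto (fun N => ∑ m ∈ Finset.range N, f m • e m) atTop (𝓝 f) := by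
  rw [Metric.tendsto_atTop]
  intro η hη
  obtain ⟨N, hN⟩ := Metric.tendsto_atTop.mp f.tendsto_atTop_zero (η / 2) (half_pos hη)
  refine ⟨N, fun N' hN' => ?_⟩
  rw [dist_comm, dist_eq_norm]
  refine (norm_le_of_forall_le (half_pos hη).le fun k => ?_).trans_lt (half_lt_self hη)
  rw [ZeroAtInftyContinuousMap.sub_apply, sum_smul_unit_apply he]
  split_ifs with hk
  · simpa using (half_pos hη).le
  · simpa using (hN k (by simp at hk; omega)).le

variable {X : Type*} [NormedAddCommGroup X] [NormedSpace ℝ X]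

lemma mul_norm_le_norm_of_offDiagSumsLE (he : ∀ n m, e n m = if m = n then 1 else 0)
    (S : C₀(ℕ, ℝ) →L[ℝ] X) {φ : ℕ → StrongDual ℝ X} (hφ : ∀ n, ‖φ n‖ ≤ 1)
    {δ ε : ℝ} (hδ : ∀ n, δ ≤ φ n (S (e n))) {M : Set ℕ}
    (hM : OffDiagSumsLE (fun n m => |φ n (S (e m))|) M ε) {F : Finset ℕ} (hFM : ↑F ⊆ M)
    (a : ℕ → ℝ) : (δ - ε) * ‖∑ m ∈ F, a m • e m‖ ≤ ‖S (∑ m ∈ F, a m • e m)‖ := by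
  rcases F.eq_empty_or_nonempty with rfl | hF
  · simp
  obtain ⟨n, hnF, hmax⟩ := F.exists_max_image (fun m => |a m|) hF
  set u := ∑ m ∈ F, a m • e m
  have hu : ‖u‖ ≤ |a n| := norm_sum_smul_unit_le he (abs_nonneg _) hmax
  have hsplit :
      φ n (S u) = a n * φ n (S (e n)) + ∑ m ∈ F.erase n, a m * φ n (S (e m)) := by
    simp only [u, map_sum, map_smul, smul_eq_mul]
    exact (Finset.add_sum_erase F _ hnF).symm
  have hrest : |∑ m ∈ F.erase n, a m * φ n (S (e m))| ≤ |a n| * ε := calc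
    _ ≤ ∑ m ∈ F.erase n, |a m| * |φ n (S (e m))| := by
        simpa only [abs_mul] using
          Finset.abs_sum_le_sum_abs (fun m => a m * φ n (S (e m))) (F.erase n)
    _ ≤ ∑ m ∈ F.erase n, |a n| * |φ n (S (e m))| :=
        Finset.sum_le_sum fun m hm =>
          mul_le_mul_of_nonneg_right (hmax m (Finset.mem_of_mem_erase hm)) (abs_nonneg _)
    _ = |a n| * ∑ m ∈ F.erase n, |φ n (S (e m))| := (Finset.mul_sum _ _ _).symm
    _ ≤ |a n| * ε := by
        refine mul_le_mul_of_nonneg_left (hM n (hFM hnF) _ fun m hm => ?_) (abs_nonneg _)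
        have hm : m ∈ F.erase n := hm
        exact ⟨hFM (Finset.mem_of_mem_erase hm), Finset.ne_of_mem_erase hm⟩
  have hφSu : |φ n (S u)| ≤ ‖S u‖ := by
    simpa using (φ n).le_of_opNorm_le (hφ n) (S u)
  have hlead : |a n| * δ ≤ ‖S u‖ + |a n| * ε := calc
    |a n| * δ ≤ |a n * φ n (S (e n))| := by
        rw [abs_mul]
        exact mul_le_mul_of_nonneg_left ((hδ n).trans (le_abs_self _)) (abs_nonneg _)
    _ = |φ n (S u) - ∑ m ∈ F.erase n, a m * φ n (S (e m))| := by
        rw [hsplit, add_sub_cancel_right]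
    _ ≤ |φ n (S u)| + |∑ m ∈ F.erase n, a m * φ n (S (e m))| := abs_sub _ _
    _ ≤ ‖S u‖ + |a n| * ε := add_le_add hφSu hrest
  rcases le_total 0 (δ - ε) with h | h
  · nlinarith
  · nlinarith [norm_nonneg u, norm_nonneg (S u)]

lemma mul_norm_le_of_support_subset (he : ∀ n m, e n m = if m = n then 1 else 0)
    (S : C₀(ℕ, ℝ) →L[ℝ] X) {M : Set ℕ} {c : ℝ}
    (h : ∀ F : Finset ℕ, ↑F ⊆ M → ∀ a : ℕ → ℝ,
      c * ‖∑ m ∈ F, a m • e m‖ ≤ ‖S (∑ m ∈ F, a m • e m)‖)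
    (f : C₀(ℕ, ℝ)) (hf : ∀ m ∉ M, f m = 0) : c * ‖f‖ ≤ ‖S f‖ := by
  classical
  have htrunc := tendsto_sum_range_smul_unit he f
  refine le_of_tendsto_of_tendsto' (htrunc.norm.const_mul c)
    ((S.continuous.tendsto f).comp htrunc).norm fun N => ?_
  have hsupp : ∑ m ∈ (Finset.range N).filter (· ∈ M), f m • e m =
      ∑ m ∈ Finset.range N, f m • e m :=
    Finset.sum_filter_of_ne fun m _ hm => by_contra fun hmM => hm (by simp [hf m hmM])
  show c * ‖∑ m ∈ Finset.range N, f m • e m‖ ≤ ‖S (∑ m ∈ Finset.range N, f m • e m)‖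
  rw [← hsupp]
  exact h _ (fun m hm => (Finset.mem_filter.mp hm).2) _

end UnitVectors

theorem stmt15_general {X : Type*} [NormedAddCommGroup X] [NormedSpace ℝ X]
    (S : C₀(ℕ, ℝ) →L[ℝ] X)
    (e : ℕ → C₀(ℕ, ℝ)) (he : ∀ n m : ℕ, e n m = if m = n then 1 else 0)
    (δ : ℝ) (hδ : 0 < δ) (hS : ∀ n, δ ≤ ‖S (e n)‖) :
    ∃ N : Set ℕ, N.Infinite ∧ ∃ c > 0, ∀ f : C₀(ℕ, ℝ),
      (∀ m ∉ N, f m = 0) → c * ‖f‖ ≤ ‖S f‖ := by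
  choose φ hφ_norm hφ_apply using fun n => exists_dual_vector'' ℝ (S (e n))
  have hδφ : ∀ n, δ ≤ φ n (S (e n)) := fun n => by simpa [hφ_apply n] using hS n
  obtain ⟨k, hk⟩ := exists_nat_ge (‖S‖ / (δ / 2))
  have hrows : OffDiagSumsLE (fun n m => |φ n (S (e m))|) Set.univ (k * (δ / 2)) :=
    fun n _ F _ => calc
      ∑ m ∈ F, |φ n (S (e m))| ≤ ‖(φ n).comp S‖ :=
        sum_abs_apply_unit_le_opNorm he ((φ n).comp S) F
      _ ≤ ‖S‖ := (ContinuousLinearMap.opNorm_comp_le _ _).trans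
        (mul_le_of_le_one_left (norm_nonneg _) (hφ_norm n))
      _ ≤ k * (δ / 2) := (div_le_iff₀ (half_pos hδ)).mp hk
  obtain ⟨M, -, hM, hMrows⟩ := hrows.exists_infinite (half_pos hδ).le k Set.infinite_univ
  refine ⟨M, hM, δ / 2, half_pos hδ, mul_norm_le_of_support_subset he S fun F hFM a => ?_⟩
  have := mul_norm_le_norm_of_offDiagSumsLE he S hφ_norm hδφ hMrows hFM a
  rwa [sub_half] at this

/-- **Rosenthal's `c₀`-theorem.** If `S : c₀ → X` is a bounded linear
operator with `inf_n ‖S eₙ‖ > 0` (where `eₙ` are the unit vectors of `c₀ = C₀(ℕ,ℝ)`),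
then there is an infinite set `N ⊆ ℕ` such that the restriction of `S` to the subspace of
sequences supported on `N` is an isomorphism onto its image.  (In particular this situation
is impossible when `X` contains no isomorphic copy of `c₀`.) -/
theorem stmt15 {X : Type*} [NormedAddCommGroup X] [NormedSpace ℝ X] [CompleteSpace X]
    (S : C₀(ℕ, ℝ) →L[ℝ] X)
    (e : ℕ → C₀(ℕ, ℝ)) (he : ∀ n m : ℕ, e n m = if m = n then 1 else 0)
    (δ : ℝ) (hδ : 0 < δ) (hS : ∀ n, δ ≤ ‖S (e n)‖) :
    ∃ N : Set ℕ, N.Infinite ∧ ∃ c > 0, ∀ f : C₀(ℕ, ℝ),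
      (∀ m ∉ N, f m = 0) → c * ‖f‖ ≤ ‖S f‖ :=
  stmt15_general S e he δ hδ hS
end
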